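/- The vector wₙ does not belong to ℕT₁; that is, there do not exist natural numbers h₁,…,hₙ, k₁,…,k_{n−1} with wₙ = h₁v₁ + ⋯ + hₙvₙ + k₁w₁ + ⋯ + k_{n−1}w_{n−1}. Equivalently, every relation e·wₙ = Σᵢ hᵢvᵢ + Σᵢ kᵢwᵢ with e ≥ 1 and all hᵢ, kᵢ ∈ ℕ forces e ≥ 2. -/
import Mathlib


/-- In the setting of the paper (`n ≥ 3`, coprime `f > g > 0`,
`(n-1)f ≤ ng`), the vector `wₙ` does not lie in `ℕT₁`: there are no natural numbers
`h₁,…,hₙ,k₁,…,k_{n-1}` with `wₙ = Σ hᵢvᵢ + Σ kᵢwᵢ`. Equivalently, any relation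
`e·wₙ = Σ hᵢvᵢ + Σ kᵢwᵢ` with `e ≥ 1` and natural coefficients forces `e ≥ 2`. -/
theorem stmt6 (n : ℕ) (hn : 3 ≤ n) (f g : ℕ) (hco : Nat.Coprime f g)
    (hg : 0 < g) (hgf : g < f) (hng : (n - 1) * f ≤ n * g)
    (v : Fin n → Fin n → ℤ)
    (hv : ∀ i : Fin n, v i = Pi.single i ((f * g : ℕ) : ℤ))
    (w : Fin (n - 1) → Fin n → ℤ)
    (hw : ∀ i : Fin (n - 1), w i = ((f : ℤ) - (g : ℤ)) •
      (Pi.single (Fin.castLE (by omega) i) (1 : ℤ) +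
        Pi.single (⟨n - 1, by omega⟩ : Fin n) (1 : ℤ)))
    (wn : Fin n → ℤ)
    (hwn : wn = (g : ℤ) ^ 2 •
        (∑ i : Fin (n - 1), Pi.single (Fin.castLE (by omega) i) (1 : ℤ) : Fin n → ℤ) +
      ((g : ℤ) * (((n : ℤ) - 1) * (g : ℤ) - ((n : ℤ) - 2) * (f : ℤ))) •
        Pi.single (⟨n - 1, by omega⟩ : Fin n) (1 : ℤ)) :
    (¬ ∃ (h : Fin n → ℕ) (k : Fin (n - 1) → ℕ),
      wn = (∑ i : Fin n, (h i : ℤ) • v i) + ∑ i : Fin (n - 1), (k i : ℤ) • w i) ∧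
    (∀ (e : ℕ) (h : Fin n → ℕ) (k : Fin (n - 1) → ℕ), 1 ≤ e →
      (e : ℤ) • wn = (∑ i : Fin n, (h i : ℤ) • v i) + (∑ i : Fin (n - 1), (k i : ℤ) • w i) →
      2 ≤ e) := by
  have hne : (n - 1 : ℕ) < n := by omega
  set c : Fin n := ⟨n - 1, hne⟩ with hc
  have hH : ¬ ∃ (h : Fin n → ℕ) (k : Fin (n - 1) → ℕ),
      wn = (∑ i : Fin n, (h i : ℤ) • v i) + ∑ i : Fin (n - 1), (k i : ℤ) • w i := by
    rintro ⟨h, k, heq⟩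
    -- coordinate equations at castLE i₀
    have key : ∀ i₀ : Fin (n - 1),
        (g : ℤ)^2 = (h (Fin.castLE hne.le i₀) : ℤ) * (f * g) + (k i₀ : ℤ) * ((f : ℤ) - g) := by
      intro i₀
      have hj : (Fin.castLE hne.le i₀ : Fin n) ≠ c := by
        intro hcon
        have := congrArg Fin.val hcon
        simp [hc] at this
        omega
      have := congrFun heq (Fin.castLE hne.le i₀)
      simp only [hwn, hv, hw, Pi.add_apply, Pi.smul_apply, Finset.sum_apply,
        Pi.single_apply, smul_eq_mul, Fin.castLE_inj, hj, if_false, mul_ite,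
        mul_one, mul_zero, add_zero, Finset.sum_ite_eq, Finset.mem_univ, if_true] at this
      push_cast at this ⊢
      linarith [this]
    -- last coordinate
    have hcx : ∀ x : Fin (n - 1), c ≠ Fin.castLE hne.le x := by
      intro x hcon
      have := congrArg Fin.val hcon
      simp [hc] at this
      omega
    have keyc : (g : ℤ) * (((n : ℤ) - 1) * g - ((n : ℤ) - 2) * f)
        = (h c : ℤ) * (f * g) + (∑ i : Fin (n - 1), (k i : ℤ)) * ((f : ℤ) - g) := by
      have := congrFun heq c
      simp only [hwn, hv, hw, Pi.add_apply, Pi.smul_apply, Finset.sum_apply,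
        Pi.single_apply, smul_eq_mul, hcx, if_false, mul_ite, mul_one, mul_zero,
        zero_add, add_zero, Finset.sum_const_zero, Finset.sum_ite_eq,
        Finset.mem_univ, if_true] at this
      rw [Finset.sum_mul]
      push_cast at this ⊢
      linarith [this]
    -- h at castLE i₀ is zero, and k i₀ * (f - g) = g ^ 2
    have hfg : (g : ℤ) + 1 ≤ (f : ℤ) := by exact_mod_cast hgf
    have hg1 : (1 : ℤ) ≤ (g : ℤ) := by exact_mod_cast hg
    have hknat : ∀ i₀ : Fin (n - 1), k i₀ * (f - g) = g ^ 2 := by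
      intro i₀
      have hkey := key i₀
      have hh0 : (h (Fin.castLE hne.le i₀) : ℤ) = 0 := by
        rcases Nat.eq_zero_or_pos (h (Fin.castLE hne.le i₀)) with h0 | h1
        · exact_mod_cast h0
        · exfalso
          have h1' : (1 : ℤ) ≤ (h (Fin.castLE hne.le i₀) : ℤ) := by exact_mod_cast h1
          have hk0 : (0 : ℤ) ≤ (k i₀ : ℤ) := Int.ofNat_nonneg _
          have hb1 : (1:ℤ) * ((f:ℤ)*g) ≤ (h (Fin.castLE hne.le i₀) : ℤ) * ((f:ℤ)*g) :=
            mul_le_mul_of_nonneg_right h1' (by positivity)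
          have hb2 : ((g:ℤ)+1) * g ≤ (f:ℤ) * g :=
            mul_le_mul_of_nonneg_right hfg (by positivity)
          nlinarith [hkey, hk0, hb1, hb2, hg1]
      have h2 : (k i₀ : ℤ) * ((f : ℤ) - g) = (g : ℤ) ^ 2 := by
        rw [hh0] at hkey; linarith [hkey]
      have h3 : ((k i₀ * (f - g) : ℕ) : ℤ) = ((g ^ 2 : ℕ) : ℤ) := by
        push_cast [Nat.cast_sub hgf.le]
        linarith [h2]
      exact_mod_cast h3
    -- f - g = 1
    have hd1 : f - g = 1 := by
      have hdvd : (f - g) ∣ g ^ 2 := by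
        obtain ⟨i₀, _⟩ : ∃ i₀ : Fin (n - 1), True := ⟨⟨0, by omega⟩, trivial⟩
        exact Dvd.intro_left _ (hknat i₀)
      have hcop : Nat.Coprime (f - g) g := (Nat.coprime_sub_self_left hgf.le).mpr hco
      exact (hcop.pow_right 2).eq_one_of_dvd hdvd
    have hfeq : f = g + 1 := by omega
    have hki : ∀ i₀ : Fin (n - 1), k i₀ = g ^ 2 := by
      intro i₀; have := hknat i₀; rw [hd1] at this; omega
    have hsum : (∑ i : Fin (n - 1), (k i : ℤ)) = ((n - 1 : ℕ) : ℤ) * (g : ℤ) ^ 2 := by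
      have hcg : ∀ i ∈ Finset.univ, ((k i : ℤ)) = ((g : ℤ) ^ 2) := by
        intro i _; rw [hki i]; push_cast; ring
      rw [Finset.sum_congr rfl hcg,
        Finset.sum_const, Finset.card_univ, Fintype.card_fin, nsmul_eq_mul]
    rw [hsum] at keyc
    have hn' : ((n - 1 : ℕ) : ℤ) = (n : ℤ) - 1 := by
      have : (3 : ℤ) ≤ (n : ℤ) := by exact_mod_cast hn
      omega
    have hfZ : (f : ℤ) = (g : ℤ) + 1 := by exact_mod_cast hfeq
    have hnZ : (3 : ℤ) ≤ (n : ℤ) := by exact_mod_cast hn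
    have hhc : (0 : ℤ) ≤ (h c : ℤ) := Int.ofNat_nonneg _
    rw [hn', hfZ] at keyc
    nlinarith [keyc, hg1, hnZ, hhc]
  refine ⟨hH, fun e h k he heq => ?_⟩
  by_contra hlt
  push_neg at hlt
  have he1 : e = 1 := by omega
  subst he1
  exact hH ⟨h, k, by simpa using heq⟩
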